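/- Let H be a real Hilbert space, F : H → ℝ a function, C₀ ≥ 0 and ε ≥ 0. Let u, w be curves with values in H both differentiable at a time t, and suppose ⟨u'(t), u(t) − w(t)⟩ ≤ F(w(t)) − F(u(t)) + (C₀/2)·‖u(t) − w(t)‖² and ⟨w'(t), w(t) − u(t)⟩ ≤ F(u(t)) − F(w(t)) + (C₀/2)·‖w(t) − u(t)‖² + ε. Then the function s ↦ ‖u(s) − w(s)‖² is differentiable at t and its derivative at t is at most 2C₀·‖u(t) − w(t)‖² + 2ε. -/

import Mathlib

open scoped RealInnerProductSpace

section

variable {H : Type*} [NormedAddCommGroup H] [InnerProductSpace ℝ H]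

theorem inner_sub_sub_eq_inner_add_inner (x y x' y' : H) :
    ⟪x - y, x' - y'⟫ = ⟪x', x - y⟫ + ⟪y', y - x⟫ := by
  rw [inner_sub_right, real_inner_comm x', real_inner_comm y', ← neg_sub x y, inner_neg_right,
    sub_eq_add_neg]

/-- The energies `F` cancel when the two inequalities are added. -/
theorem inner_sub_sub_le_of_evi {F : H → ℝ} {C₀ ε : ℝ} {x y x' y' : H}
    (hx : ⟪x', x - y⟫ ≤ F y - F x + C₀ / 2 * ‖x - y‖ ^ 2)
    (hy : ⟪y', y - x⟫ ≤ F x - F y + C₀ / 2 * ‖y - x‖ ^ 2 + ε) :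
    ⟪x - y, x' - y'⟫ ≤ C₀ * ‖x - y‖ ^ 2 + ε := by
  rw [inner_sub_sub_eq_inner_add_inner]
  rw [norm_sub_rev] at hy
  linarith

end

theorem evi_doubling_step_general
    {H : Type*} [NormedAddCommGroup H] [InnerProductSpace ℝ H]
    (F : H → ℝ) (C₀ ε : ℝ)
    (u w : ℝ → H) (u' w' : H) (t : ℝ)
    (hu : HasDerivAt u u' t) (hw : HasDerivAt w w' t)
    (hu_evi : (inner ℝ u' (u t - w t) : ℝ)
      ≤ F (w t) - F (u t) + (C₀ / 2) * ‖u t - w t‖ ^ 2)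
    (hw_evi : (inner ℝ w' (w t - u t) : ℝ)
      ≤ F (u t) - F (w t) + (C₀ / 2) * ‖w t - u t‖ ^ 2 + ε) :
    DifferentiableAt ℝ (fun s => ‖u s - w s‖ ^ 2) t ∧
      deriv (fun s => ‖u s - w s‖ ^ 2) t ≤ 2 * C₀ * ‖u t - w t‖ ^ 2 + 2 * ε := by
  have hdist : HasDerivAt (fun s => ‖u s - w s‖ ^ 2) (2 * ⟪u t - w t, u' - w'⟫) t :=
    (hu.sub hw).norm_sq
  refine ⟨hdist.differentiableAt, ?_⟩
  rw [hdist.deriv]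
  linarith [inner_sub_sub_le_of_evi hu_evi hw_evi]

/-- Doubling step in the proof of the error estimate: combining the two
evolutionary variational inequalities, each evaluated at the other curve,
gives a differential inequality for the squared distance. -/
theorem evi_doubling_step
    {H : Type*} [NormedAddCommGroup H] [InnerProductSpace ℝ H] [CompleteSpace H]
    (F : H → ℝ) (C₀ ε : ℝ) (hC₀ : 0 ≤ C₀) (hε : 0 ≤ ε)
    (u w : ℝ → H) (u' w' : H) (t : ℝ)
    (hu : HasDerivAt u u' t) (hw : HasDerivAt w w' t)
    (hu_evi : (inner ℝ u' (u t - w t) : ℝ)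
      ≤ F (w t) - F (u t) + (C₀ / 2) * ‖u t - w t‖ ^ 2)
    (hw_evi : (inner ℝ w' (w t - u t) : ℝ)
      ≤ F (u t) - F (w t) + (C₀ / 2) * ‖w t - u t‖ ^ 2 + ε) :
    DifferentiableAt ℝ (fun s => ‖u s - w s‖ ^ 2) t ∧
      deriv (fun s => ‖u s - w s‖ ^ 2) t ≤ 2 * C₀ * ‖u t - w t‖ ^ 2 + 2 * ε :=
  evi_doubling_step_general F C₀ ε u w u' w' t hu hw hu_evi hw_evi
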